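/- Let (b_N), (d_N), (b'_N), (d'_N) be non-decreasing sequences of positive integers with b_N·d_N = b'_N·d'_N = M_N for all N, where M_N → ∞, and let ϑ, ϑ' ∈ {−1, 1} with ϑ ≠ ϑ'. If lim_{N→∞} (1/M_N²) · #{ (i,j) ∈ [M_N]² : Γ_{b_N,d_N}^{(ϑ)}(i,j) = Γ_{b'_N,d'_N}^{(ϑ')}(i,j) } = 0, then for each s ∈ {1, 2}, #{ (i₁, i₂, j) ∈ [M_N]³ : π_s(Γ_{b_N,d_N}^{(ϑ)}(i₁, j)) = π_s(Γ_{b'_N,d'_N}^{(ϑ')}(i₂, j)) } = o(M_N³), i.e. this count divided by M_N³ tends to 0 as N → ∞, where π_s : [M_N]² → [M_N] is the projection onto the s-th coordinate. -/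

import Mathlib

open Filter

/-- The partial transpose `Γ_{b,d}^{(ϑ)} : [N]² → [N]²` for `N = b·d`, as an entry permutation.
Identifying `[N] ≃ [b] × [d]` via `i = a₁·d + a₂` (`0`-based), the right partial transpose
(`θ = true`, i.e. `ϑ = 1`) swaps `a₂` and `a₋₂`, while the left partial transpose (`θ = false`,
i.e. `ϑ = -1`) swaps `a₁` and `a₋₁`. -/
def pt {b d M : ℕ} (θ : Bool) (h : b * d = M) :
    Fin M × Fin M → Fin M × Fin M := fun x =>
  let e : Fin M ≃ Fin b × Fin d := (finCongr h).symm.trans finProdFinEquiv.symm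
  let u := e x.1
  let v := e x.2
  if θ then (e.symm (u.1, v.2), e.symm (v.1, u.2))
  else (e.symm (v.1, u.2), e.symm (u.1, v.2))

/-!
Both partial transposes act by splicing base-`d` digits: with
`splice d i j = d * (i / d) + j % d` one has `Γ^{(1)}_{b,d}(i, j) = (splice d i j, splice d j i)`,
and `Γ^{(-1)}_{b,d}` is its swap. For `ϑ ≠ ϑ'` every triple count is, up to relabelling,
`T = #{(i₁, i₂, j) : splice d i₁ j = splice d' j i₂}`. Fixing `(i₂, j)` leaves at most `d`
choices of `i₁`, and fixing `(i₁, j)` at most `b'` choices of `i₂`, so `T² ≤ M⁴ · d · b'`.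
The coincidence set contains every pair lying in a common `d`-block and agreeing modulo `d'`,
which gives `d · b' ≤ C + M`. Hence `(T / M³)² ≤ C / M² + 1 / M → 0`.
-/

open Finset

def splice (d i j : ℕ) : ℕ := d * (i / d) + j % d

lemma splice_add_splice (d i j : ℕ) : splice d i j + splice d j i = i + j := by
  have hi := Nat.div_add_mod i d
  have hj := Nat.div_add_mod j d
  unfold splice
  omega

lemma splice_mod (d i j : ℕ) : splice d i j % d = j % d := by
  rw [splice, Nat.mul_add_mod, Nat.mod_mod]

lemma splice_div {d : ℕ} (hd : 0 < d) (i j : ℕ) : splice d i j / d = i / d := by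
  rw [splice, Nat.mul_add_div hd, Nat.div_eq_of_lt (Nat.mod_lt j hd), add_zero]

lemma splice_of_div_eq {d i j : ℕ} (h : i / d = j / d) : splice d i j = j := by
  rw [splice, h, Nat.div_add_mod]

lemma splice_of_mod_eq {d i j : ℕ} (h : j % d = i % d) : splice d i j = i := by
  rw [splice, h, Nat.div_add_mod]

def coincidences (d d' M : ℕ) : Finset (Fin M × Fin M) :=
  univ.filter fun x => splice d x.1 x.2 = splice d' x.2 x.1

def splicedTriples (d d' M : ℕ) : Finset (Fin M × Fin M × Fin M) :=
  univ.filter fun x => splice d x.1 x.2.2 = splice d' x.2.2 x.2.1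

lemma card_coincidences_comm (d d' M : ℕ) :
    (coincidences d d' M).card = (coincidences d' d M).card :=
  card_nbij' Prod.swap Prod.swap (fun _ hx => by simpa [coincidences, eq_comm] using hx)
    (fun _ hx => by simpa [coincidences, eq_comm] using hx) (fun _ _ => rfl) (fun _ _ => rfl)

lemma card_splicedTriples_comm (d d' M : ℕ) :
    (univ.filter fun x : Fin M × Fin M × Fin M => splice d x.2.2 x.1 = splice d' x.2.1 x.2.2).card
      = (splicedTriples d' d M).card := by
  refine card_nbij' (fun x => (x.2.1, x.1, x.2.2)) (fun x => (x.2.1, x.1, x.2.2)) ?_ ?_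
    (fun _ _ => rfl) (fun _ _ => rfl) <;>
  · intro x hx
    simpa [splicedTriples, eq_comm] using hx

section counting

variable {b d b' d' M : ℕ}

lemma pt_false (h : b * d = M) (x : Fin M × Fin M) : pt false h x = (pt true h x).swap := by
  simp [pt]

@[simp]
lemma val_pt_true_fst (h : b * d = M) (x : Fin M × Fin M) :
    ((pt true h x).1 : ℕ) = splice d x.1 x.2 := by
  simp [pt, splice, finProdFinEquiv, Fin.divNat, Fin.modNat, finCongr, add_comm]

@[simp]
lemma val_pt_true_snd (h : b * d = M) (x : Fin M × Fin M) :
    ((pt true h x).2 : ℕ) = splice d x.2 x.1 := by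
  simp [pt, splice, finProdFinEquiv, Fin.divNat, Fin.modNat, finCongr, add_comm]

lemma pt_eq_pt_iff (h : b * d = M) (h' : b' * d' = M) {θ θ' : Bool}
    (hθ : θ ≠ θ') (x : Fin M × Fin M) :
    pt θ h x = pt θ' h' x ↔ splice d x.1 x.2 = splice d' x.2 x.1 := by
  have hsum := splice_add_splice d x.1 x.2
  have hsum' := splice_add_splice d' x.1 x.2
  cases θ <;> cases θ' <;> simp only [ne_eq, not_true_eq_false] at hθ <;>
    simp only [pt_false, Prod.ext_iff, Prod.fst_swap, Prod.snd_swap, Fin.ext_iff,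
      val_pt_true_fst, val_pt_true_snd] <;> omega

lemma card_splicedTriples_le_left (hd : 0 < d) :
    (splicedTriples d d' M).card ≤ d * (M * M) := by
  simpa using card_le_mul_card_image_of_maps_to (f := fun x => x.2)
    (t := (univ : Finset (Fin M × Fin M))) (fun _ _ => mem_univ _) d fun p _ => by
      refine (card_le_card_of_injOn (t := range d) (fun x => (x.1 : ℕ) % d)
        (fun x _ => mem_range.2 (Nat.mod_lt _ hd)) ?_).trans (card_range d).le
      intro x hx y hy hxy
      simp only [splicedTriples, coe_filter, mem_filter, mem_univ, true_and] at hx hy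
      have hdiv : (x.1 : ℕ) / d = y.1 / d := by
        rw [← splice_div hd x.1 x.2.2, ← splice_div hd y.1 y.2.2, hx.1, hy.1, hx.2, hy.2]
      ext1
      · exact Fin.ext (Nat.ext_div_mod hdiv hxy)
      · rw [hx.2, hy.2]

lemma card_splicedTriples_le_right (h' : b' * d' = M) :
    (splicedTriples d d' M).card ≤ b' * (M * M) := by
  simpa using card_le_mul_card_image_of_maps_to (f := fun x => (x.1, x.2.2))
    (t := (univ : Finset (Fin M × Fin M))) (fun _ _ => mem_univ _) b' fun p _ => by
      refine (card_le_card_of_injOn (t := range b') (fun x => (x.2.1 : ℕ) / d')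
        (fun x _ => mem_range.2 (Nat.div_lt_of_lt_mul (by rw [mul_comm, h']; exact x.2.1.isLt)))
        ?_).trans (card_range b').le
      intro x hx y hy hxy
      simp only [splicedTriples, coe_filter, mem_filter, mem_univ, true_and, Prod.ext_iff]
        at hx hy
      have hmod : (x.2.1 : ℕ) % d' = y.2.1 % d' := by
        rw [← splice_mod d' x.2.2 x.2.1, ← splice_mod d' y.2.2 y.2.1, ← hx.1, ← hy.1, hx.2.1,
          hy.2.1, hx.2.2, hy.2.2]
      ext1
      · rw [hx.2.1, hy.2.1]
      ext1
      · exact Fin.ext (Nat.ext_div_mod hxy hmod)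
      · rw [hx.2.2, hy.2.2]

lemma mem_coincidences_of_div_eq_of_mod_eq {i j : Fin M} (hdiv : (i : ℕ) / d = j / d)
    (hmod : (i : ℕ) % d' = j % d') : (i, j) ∈ coincidences d d' M := by
  simp only [coincidences, mem_filter, mem_univ, true_and]
  exact (splice_of_div_eq hdiv).trans (splice_of_mod_eq hmod).symm

lemma mod_add_mul_lt_of_lt_div {t : ℕ} (r : ℕ) (hd' : 0 < d') (ht : t < d / d') :
    r % d' + d' * t < d :=
  calc r % d' + d' * t < d' * (t + 1) := by
        rw [mul_add, mul_one, add_comm]; exact Nat.add_lt_add_left (Nat.mod_lt _ hd') _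
    _ ≤ d' * (d / d') := Nat.mul_le_mul_left _ ht
    _ ≤ d := Nat.mul_div_le d d'

lemma mul_div_add_lt (h : b * d = M) {i r : ℕ} (hi : i < M) (hr : r < d) : d * (i / d) + r < M :=
  calc d * (i / d) + r < d * (i / d + 1) := by rw [mul_add, mul_one]; omega
    _ ≤ d * b := Nat.mul_le_mul_left _ (Nat.div_lt_of_lt_mul (by rwa [mul_comm, h]))
    _ = M := by rw [mul_comm, h]

lemma mul_div_le_card_coincidences (h : b * d = M) (hd' : 0 < d') :
    M * (d / d') ≤ (coincidences d d' M).card := by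
  have hr (i : Fin M) (t : Fin (d / d')) := mod_add_mul_lt_of_lt_div (i % d) hd' t.isLt
  -- `(i, t)` goes to `(i, j)` with `j` the `t`-th element of the `d`-block of `i` that is
  -- congruent to `i` modulo `d'`
  let partner : Fin M × Fin (d / d') → Fin M × Fin M := fun p =>
    (p.1, ⟨d * (p.1 / d) + ((p.1 % d) % d' + d' * p.2), mul_div_add_lt h p.1.isLt (hr p.1 p.2)⟩)
  calc M * (d / d') = (univ : Finset (Fin M × Fin (d / d'))).card := by simp
    _ ≤ (coincidences d d' M).card := by
      refine card_le_card_of_injOn partner (fun ⟨i, t⟩ _ => ?_) (fun p _ q _ hpq => ?_)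
      · refine mem_coincidences_of_div_eq_of_mod_eq ?_ ?_
        · rw [Nat.mul_add_div (Nat.zero_lt_of_lt (hr i t)), Nat.div_eq_of_lt (hr i t), add_zero]
        · have hi : (i : ℕ) = d * (i / d) + (i % d) % d' + d' * ((i % d) / d') := by
            have := Nat.div_add_mod i d
            have := Nat.mod_add_div (i % d) d'
            linarith
          change (i : ℕ) % d' = (d * (i / d) + ((i % d) % d' + d' * t)) % d'
          rw [← add_assoc, Nat.add_mul_mod_self_left]
          conv_lhs => rw [hi]
          rw [Nat.add_mul_mod_self_left]
      · simp only [partner, Prod.ext_iff, Fin.ext_iff] at hpq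
        obtain ⟨h1, h2⟩ := hpq
        rw [h1] at h2
        exact Prod.ext (Fin.ext h1) (Fin.ext (Nat.eq_of_mul_eq_mul_left hd' (by omega)))

lemma mul_le_card_coincidences_add (h : b * d = M) (h' : b' * d' = M)
    (hd' : 0 < d') : d * b' ≤ (coincidences d d' M).card + M := by
  calc d * b' ≤ d' * (d / d' + 1) * b' := Nat.mul_le_mul_right _ (Nat.lt_mul_div_succ d hd').le
    _ = M * (d / d') + M := by rw [← h']; ring
    _ ≤ (coincidences d d' M).card + M := by grw [mul_div_le_card_coincidences h hd']

lemma sq_card_splicedTriples_le (h : b * d = M) (h' : b' * d' = M) :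
    (splicedTriples d d' M).card ^ 2 ≤ M ^ 4 * ((coincidences d d' M).card + M) := by
  rcases Nat.eq_zero_or_pos M with rfl | hM
  · simp [splicedTriples]
  have hd : 0 < d := Nat.pos_of_mul_pos_left (h ▸ hM)
  have hd' : 0 < d' := Nat.pos_of_mul_pos_left (h' ▸ hM)
  calc (splicedTriples d d' M).card ^ 2
      ≤ (d * (M * M)) * (b' * (M * M)) := by
        rw [sq]
        exact Nat.mul_le_mul (card_splicedTriples_le_left hd) (card_splicedTriples_le_right h')
    _ = M ^ 4 * (d * b') := by ring
    _ ≤ M ^ 4 * ((coincidences d d' M).card + M) := by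
        grw [mul_le_card_coincidences_add h h' hd']

lemma sq_card_splicedTriples_div_le (h : b * d = M) (h' : b' * d' = M) :
    (((splicedTriples d d' M).card : ℝ) / M ^ 3) ^ 2
      ≤ (coincidences d d' M).card / M ^ 2 + 1 / M := by
  rcases Nat.eq_zero_or_pos M with rfl | hM
  · simp
  have hsq : ((splicedTriples d d' M).card : ℝ) ^ 2
      ≤ M ^ 4 * ((coincidences d d' M).card + M) := by
    exact_mod_cast sq_card_splicedTriples_le h h'
  calc _ = ((splicedTriples d d' M).card : ℝ) ^ 2 / M ^ 6 := by ring
    _ ≤ M ^ 4 * ((coincidences d d' M).card + M) / M ^ 6 := by gcongr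
    _ = _ := by field_simp

end counting

theorem tendsto_card_splicedTriples_div {b d b' d' M : ℕ → ℕ} (h : ∀ n, b n * d n = M n)
    (h' : ∀ n, b' n * d' n = M n) (hM : Tendsto M atTop atTop)
    (hC : Tendsto (fun n => ((coincidences (d n) (d' n) (M n)).card : ℝ) / M n ^ 2)
      atTop (nhds 0)) :
    Tendsto (fun n => ((splicedTriples (d n) (d' n) (M n)).card : ℝ) / M n ^ 3)
      atTop (nhds 0) := by
  have hbound := (hC.add (tendsto_one_div_atTop_nhds_zero_nat.comp hM)).sqrt
  rw [add_zero, Real.sqrt_zero] at hbound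
  exact squeeze_zero (fun n => by positivity) (fun n => (le_abs_self _).trans
    (Real.abs_le_sqrt (sq_card_splicedTriples_div_le (h n) (h' n)))) hbound

theorem stmt_10_general (b d b' d' M : ℕ → ℕ)
    (hM : ∀ n, b n * d n = M n) (hM' : ∀ n, b' n * d' n = M n)
    (hMtop : Tendsto M atTop atTop) (θ θ' : Bool) (hθ : θ ≠ θ')
    (h0 : Tendsto
      (fun n => ((Finset.univ.filter fun x : Fin (M n) × Fin (M n) =>
          pt θ (hM n) x = pt θ' (hM' n) x).card : ℝ) / (M n : ℝ) ^ 2)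
      atTop (nhds 0)) :
    Tendsto
      (fun n => ((Finset.univ.filter fun x : Fin (M n) × Fin (M n) × Fin (M n) =>
          (pt θ (hM n) (x.1, x.2.2)).1 = (pt θ' (hM' n) (x.2.1, x.2.2)).1).card : ℝ)
        / (M n : ℝ) ^ 3)
      atTop (nhds 0)
    ∧ Tendsto
      (fun n => ((Finset.univ.filter fun x : Fin (M n) × Fin (M n) × Fin (M n) =>
          (pt θ (hM n) (x.1, x.2.2)).2 = (pt θ' (hM' n) (x.2.1, x.2.2)).2).card : ℝ)
        / (M n : ℝ) ^ 3)
      atTop (nhds 0) := by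
  have hC : Tendsto (fun n => ((coincidences (d n) (d' n) (M n)).card : ℝ) / M n ^ 2)
      atTop (nhds 0) := by
    simpa only [coincidences, pt_eq_pt_iff (hM _) (hM' _) hθ] using h0
  have h1 := tendsto_card_splicedTriples_div hM hM' hMtop hC
  have h2 := tendsto_card_splicedTriples_div hM' hM hMtop
    (by simpa only [card_coincidences_comm] using hC)
  cases θ <;> cases θ' <;> simp only [ne_eq, not_true_eq_false] at hθ <;>
    simp only [pt_false, Prod.fst_swap, Prod.snd_swap, Fin.ext_iff, val_pt_true_fst,
      val_pt_true_snd, card_splicedTriples_comm]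
  · exact ⟨h2, h1⟩
  · exact ⟨h1, h2⟩

/-- for non-decreasing sequences of positive integers with
`b_N·d_N = b'_N·d'_N = M_N → ∞` and opposite `ϑ ≠ ϑ'` (encoded by `θ ≠ θ'`), if
`(1/M_N²)·#{(i,j) : Γ_{b_N,d_N}^{(ϑ)}(i,j) = Γ_{b'_N,d'_N}^{(ϑ')}(i,j)} → 0`, then for each
coordinate projection `π_s` (`s = 1, 2`),
`#{(i₁,i₂,j) : π_s(Γ_{b_N,d_N}^{(ϑ)}(i₁,j)) = π_s(Γ_{b'_N,d'_N}^{(ϑ')}(i₂,j))} = o(M_N³)`. -/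
theorem stmt_10 (b d b' d' M : ℕ → ℕ)
    (hbm : Monotone b) (hdm : Monotone d) (hb'm : Monotone b') (hd'm : Monotone d')
    (hb : ∀ n, 0 < b n) (hd : ∀ n, 0 < d n) (hb' : ∀ n, 0 < b' n) (hd' : ∀ n, 0 < d' n)
    (hM : ∀ n, b n * d n = M n) (hM' : ∀ n, b' n * d' n = M n)
    (hMtop : Tendsto M atTop atTop) (θ θ' : Bool) (hθ : θ ≠ θ')
    (h0 : Tendsto
      (fun n => ((Finset.univ.filter fun x : Fin (M n) × Fin (M n) =>
          pt θ (hM n) x = pt θ' (hM' n) x).card : ℝ) / (M n : ℝ) ^ 2)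
      atTop (nhds 0)) :
    Tendsto
      (fun n => ((Finset.univ.filter fun x : Fin (M n) × Fin (M n) × Fin (M n) =>
          (pt θ (hM n) (x.1, x.2.2)).1 = (pt θ' (hM' n) (x.2.1, x.2.2)).1).card : ℝ)
        / (M n : ℝ) ^ 3)
      atTop (nhds 0)
    ∧ Tendsto
      (fun n => ((Finset.univ.filter fun x : Fin (M n) × Fin (M n) × Fin (M n) =>
          (pt θ (hM n) (x.1, x.2.2)).2 = (pt θ' (hM' n) (x.2.1, x.2.2)).2).card : ℝ)
        / (M n : ℝ) ^ 3)
      atTop (nhds 0) :=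
  stmt_10_general b d b' d' M hM hM' hMtop θ θ' hθ h0
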